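/- Let m and n be positive integers with m ≤ n−1 and let a, c be real numbers such that a, c, and a−c are not integers. Then Σ_{k=0}^{m} [(−m)_k (a)_k (c+n)_k] / [(c)_k (a+1)_k · k!] = (−1)^n · m! · Γ(1−c+a)·Γ(a+1)·Γ(c) / (Γ(c+n)·Γ(1−n−c+a)·Γ(m+a+1)) + [n!·Γ(a+1)·Γ(c) / (Γ(c+n)·Γ(1−n−c+a))] · Σ_{k=0}^{n−m−1} (−1)^{m+k} · Γ(1−n−c+a+k) / (Γ(n−m−k) · (n−k) · k! · Γ(m+a+1−n+k)). -/

import Mathlib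

open scoped BigOperators
open Finset

/-- Pochhammer (ascending factorial) `(x)_k = x (x+1) ⋯ (x+k-1)`. -/
noncomputable def poch (x : ℝ) (k : ℕ) : ℝ := Polynomial.eval x (ascPochhammer ℝ k)

open Polynomial fwdDiff

/-!
Since `(a)_k / (a+1)_k = a / (a+k)`, `(-m)_k / k! = (-1)^k C(m,k)` and
`(c+n)_k / (c)_k = (c+k)_n / (c)_n`, the series equals
`a / (c)_n · ∑_k (-1)^k C(m,k) (c+k)_n / (a+k)`.
Chu–Vandermonde for falling factorials splits `(c+k)_n = (c-a)_n + (a+k) Q(k)`, where `Q` is a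
combination of the falling factorials `(a-1+k)^{(d)}`, `d < n`. The constant part gives the
partial-fraction sum `∑_k (-1)^k C(m,k) / (a+k) = m! / (a)_{m+1}`. On `Q` the alternating sum is
`(-1)^m` times an `m`-th forward difference, which sends `x^{(d)}` to `d^{(m)} x^{(d-m)}` and so
keeps only the falling factorials with `d ≥ m`. Each Pochhammer symbol is finally a ratio of Gamma
values, `Γ(x + k) = (x)_k Γ(x)`.
-/

section FallingFactorial
variable {R : Type*} [CommRing R]

lemma descPochhammer_succ_eval_left (d : ℕ) (x : R) :
    (descPochhammer R (d + 1)).eval x = x * (descPochhammer R d).eval (x - 1) := by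
  simp [descPochhammer_succ_left]

lemma fwdDiff_descPochhammer_eval (d : ℕ) :
    Δ_[1] (descPochhammer R d).eval = fun x => (d : R) * (descPochhammer R (d - 1)).eval x := by
  ext x
  change (descPochhammer R d).eval (x + 1) - (descPochhammer R d).eval x = _
  cases d with
  | zero => simp
  | succ d =>
    rw [descPochhammer_succ_eval_left, add_sub_cancel_right, descPochhammer_succ_eval]
    push_cast
    ring

lemma fwdDiff_iter_descPochhammer_eval (d m : ℕ) :
    (Δ_[1])^[m] (descPochhammer R d).eval =
      fun x => (d.descFactorial m : R) * (descPochhammer R (d - m)).eval x := by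
  induction m with
  | zero => simp
  | succ m ih =>
    ext x
    have step := congrFun (fwdDiff_descPochhammer_eval (R := R) (d - m)) x
    simp only [fwdDiff] at step
    simp only [Function.iterate_succ_apply', ih, fwdDiff]
    rw [← mul_sub, step, Nat.descFactorial_succ, Nat.sub_sub]
    push_cast
    ring

lemma sum_range_alternating_choose_mul_eq_fwdDiff_iter (f : R → R) (m : ℕ) (x : R) :
    ∑ k ∈ range (m + 1), (-1) ^ k * m.choose k * f (x + k) = (-1) ^ m * (Δ_[1])^[m] f x := by
  rw [fwdDiff_iter_eq_sum_shift, mul_sum]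
  refine sum_congr rfl fun k hk => ?_
  obtain ⟨j, rfl⟩ := Nat.exists_eq_add_of_le (Nat.lt_succ_iff.mp (mem_range.mp hk))
  have hsq : ((-1 : R) ^ j) * (-1) ^ j = 1 := by rw [← mul_pow]; simp
  rw [zsmul_eq_mul, nsmul_one, Nat.add_sub_cancel_left]
  push_cast
  linear_combination (-(-1) ^ k * (k + j).choose k * f (x + k)) * hsq

lemma descPochhammer_eval_add (x y : R) (n : ℕ) :
    (descPochhammer R n).eval (x + y) = ∑ j ∈ range (n + 1),
      n.choose j * (descPochhammer R j).eval x * (descPochhammer R (n - j)).eval y := by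
  have key := Ring.descPochhammer_smeval_add n (Commute.all x y)
  simp only [← aeval_eq_smeval, aeval_def, ← eval_map, descPochhammer_map] at key
  rw [key, Nat.sum_antidiagonal_eq_sum_range_succ fun i j =>
    (n.choose i : R) * ((descPochhammer R i).eval x * (descPochhammer R j).eval y)]
  simp only [mul_assoc]

end FallingFactorial

lemma poch_succ (x : ℝ) (k : ℕ) : poch x (k + 1) = poch x k * (x + k) :=
  ascPochhammer_succ_eval k x

lemma poch_succ_left (x : ℝ) (k : ℕ) : poch x (k + 1) = x * poch (x + 1) k := by
  simp [poch, ascPochhammer_succ_left]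

lemma poch_add (x : ℝ) (i j : ℕ) : poch x (i + j) = poch x i * poch (x + i) j := by
  simp [poch, ← ascPochhammer_mul]

lemma poch_ne_zero {x : ℝ} (hx : ∀ i : ℕ, x ≠ -i) (k : ℕ) : poch x k ≠ 0 := by
  rw [poch, Ne, ascPochhammer_eval_eq_zero_iff]
  rintro ⟨i, -, hi⟩
  exact hx i (by linarith)

lemma add_intCast_ne_neg_natCast {x : ℝ} (hx : ∀ z : ℤ, x ≠ z) (t : ℤ) (i : ℕ) :
    x + t ≠ -i :=
  fun h => hx (-i - t) (by push_cast; linarith)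

lemma add_one_ne_neg_natCast {x : ℝ} (hx : ∀ i : ℕ, x ≠ -i) (i : ℕ) : x + 1 ≠ -i :=
  fun h => hx (i + 1) (by push_cast; linarith)

lemma poch_neg (x : ℝ) (k : ℕ) : poch (-x) k = (-1) ^ k * (descPochhammer ℝ k).eval x :=
  ascPochhammer_eval_neg_eq_descPochhammer ℝ x k

lemma poch_eq_descPochhammer (x : ℝ) (k : ℕ) :
    poch x k = (descPochhammer ℝ k).eval (x + k - 1) := by
  rw [descPochhammer_eval_eq_ascPochhammer, poch]
  ring_nf

lemma poch_neg_natCast (m k : ℕ) : poch (-m) k = (-1) ^ k * k.factorial * m.choose k := by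
  rw [poch_neg, descPochhammer_eval_eq_descFactorial, Nat.descFactorial_eq_factorial_mul_choose]
  push_cast
  ring

lemma poch_add_eq_poch_add_mul_sum (y x : ℝ) (n : ℕ) :
    poch (y + x) n = poch y n + x * ∑ j ∈ range n, n.choose j *
      (descPochhammer ℝ j).eval (y + n - 1) * (descPochhammer ℝ (n - 1 - j)).eval (x - 1) := by
  rw [poch_eq_descPochhammer, show y + x + n - 1 = (y + n - 1) + x by ring,
    descPochhammer_eval_add, sum_range_succ, Nat.choose_self, Nat.sub_self,
    poch_eq_descPochhammer, mul_sum]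
  simp only [descPochhammer_zero, eval_one, Nat.cast_one, one_mul, mul_one]
  rw [add_comm]
  congr 1
  refine sum_congr rfl fun j hj => ?_
  rw [show n - j = n - 1 - j + 1 by have := mem_range.mp hj; omega, descPochhammer_succ_eval_left]
  ring

lemma fwdDiff_iter_inv {x : ℝ} (hx : ∀ i : ℕ, x ≠ -i) (m : ℕ) :
    (Δ_[1])^[m] (fun y : ℝ => y⁻¹) x = (-1) ^ m * m.factorial / poch x (m + 1) := by
  induction m generalizing x with
  | zero => simp [poch]
  | succ m ih =>
    have hx1 := add_one_ne_neg_natCast hx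
    rw [Function.iterate_succ_apply']
    change (Δ_[1])^[m] (fun y : ℝ => y⁻¹) (x + 1) - (Δ_[1])^[m] (fun y : ℝ => y⁻¹) x = _
    rw [ih hx1, ih hx, poch_succ_left x (m + 1), poch_succ_left x m, poch_succ (x + 1) m]
    have h0 : x ≠ 0 := by simpa using hx 0
    have hm : x + 1 + m ≠ 0 := fun h => hx (m + 1) (by push_cast; linarith)
    have hP := poch_ne_zero hx1 m
    rw [Nat.factorial_succ]
    field_simp
    push_cast
    ring

lemma sum_range_alternating_choose_div_add {x : ℝ} (hx : ∀ i : ℕ, x ≠ -i) (m : ℕ) :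
    ∑ k ∈ range (m + 1), (-1) ^ k * m.choose k / (x + k) = m.factorial / poch x (m + 1) := by
  have h := sum_range_alternating_choose_mul_eq_fwdDiff_iter (fun y : ℝ => y⁻¹) m x
  rw [fwdDiff_iter_inv hx, ← mul_div_assoc, ← mul_assoc, ← pow_add, ← two_mul, pow_mul] at h
  simpa [div_eq_mul_inv] using h

lemma sum_range_alternating_choose_mul_poch_div (m n : ℕ) {a : ℝ} (ha : ∀ i : ℕ, a ≠ -i)
    (c : ℝ) :
    ∑ k ∈ range (m + 1), (-1) ^ k * m.choose k * poch (c + k) n / (a + k) =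
      m.factorial * poch (c - a) n / poch a (m + 1) + (-1) ^ m * ∑ j ∈ range n, n.choose j *
        (descPochhammer ℝ j).eval (c - a + n - 1) *
          ((n - 1 - j).descFactorial m * (descPochhammer ℝ (n - 1 - j - m)).eval (a - 1)) := by
  have split : ∀ k ∈ range (m + 1), (-1) ^ k * m.choose k * poch (c + k) n / (a + k) =
      poch (c - a) n * ((-1) ^ k * m.choose k / (a + k)) + ∑ j ∈ range n,
        n.choose j * (descPochhammer ℝ j).eval (c - a + n - 1) *
          ((-1) ^ k * m.choose k * (descPochhammer ℝ (n - 1 - j)).eval (a - 1 + k)) := by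
    intro k _
    have hak : a + k ≠ 0 := fun h => ha k (by linarith)
    rw [show c + k = (c - a) + (a + k) by ring, poch_add_eq_poch_add_mul_sum, mul_add, add_div,
      mul_left_comm _ (a + k), mul_div_cancel_left₀ _ hak, mul_sum]
    congr 1
    · ring
    · refine sum_congr rfl fun j _ => ?_
      rw [show a + k - 1 = a - 1 + k by ring]
      ring
  rw [sum_congr rfl split, sum_add_distrib, ← mul_sum, sum_range_alternating_choose_div_add ha,
    sum_comm, mul_sum]
  congr 1
  · ring
  · refine sum_congr rfl fun j _ => ?_
    rw [← mul_sum, sum_range_alternating_choose_mul_eq_fwdDiff_iter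
      (descPochhammer ℝ (n - 1 - j)).eval, fwdDiff_iter_descPochhammer_eval]
    ring

lemma hypergeometric_term_eq {a c : ℝ} (ha : ∀ i : ℕ, a ≠ -i) (hc : ∀ i : ℕ, c ≠ -i)
    (m n k : ℕ) :
    poch (-m) k * poch a k * poch (c + n) k / (poch c k * poch (a + 1) k * k.factorial) =
      a / poch c n * ((-1) ^ k * m.choose k * poch (c + k) n / (a + k)) := by
  have ha1 := add_one_ne_neg_natCast ha
  have hak : a + k ≠ 0 := fun h => ha k (by linarith)
  have hshift_a : poch a k * (a + k) = a * poch (a + 1) k := by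
    rw [← poch_succ, poch_succ_left]
  have hshift_c : poch c k * poch (c + k) n = poch c n * poch (c + n) k := by
    rw [← poch_add, ← poch_add, add_comm]
  have := poch_ne_zero hc k
  have := poch_ne_zero hc n
  have := poch_ne_zero ha1 k
  have : (k.factorial : ℝ) ≠ 0 := by positivity
  rw [poch_neg_natCast]
  field_simp
  linear_combination (m.choose k : ℝ) * (poch c n * poch (c + n) k * hshift_a -
    a * poch (a + 1) k * hshift_c)

lemma choose_mul_descFactorial_mul_factorial {n m j : ℕ} (h : j + m < n) :
    n.choose j * (n - 1 - j).descFactorial m * ((n - m - 1 - j).factorial * (n - j) * j.factorial)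
      = n.factorial := by
  have hfall := Nat.factorial_mul_descFactorial (show m ≤ n - 1 - j by omega)
  have hsucc : (n - j).factorial = (n - j) * (n - 1 - j).factorial := by
    rw [show n - j = n - 1 - j + 1 by omega, Nat.factorial_succ]
  rw [← Nat.choose_mul_factorial_mul_factorial (show j ≤ n by omega), hsucc, ← hfall,
    show n - 1 - j - m = n - m - 1 - j by omega]
  ring

lemma falling_summand_eq_poch_summand {m n j : ℕ} (h : j + m < n) (a c : ℝ) :
    a * ((-1) ^ m * (n.choose j * (descPochhammer ℝ j).eval (c - a + n - 1) *
      ((n - 1 - j).descFactorial m * (descPochhammer ℝ (n - 1 - j - m)).eval (a - 1)))) =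
    n.factorial * ((-1) ^ (m + j) * poch (1 - n - c + a) j *
      poch (m + a + 1 - n + j) (n - m - j) /
        ((n - m - 1 - j).factorial * (n - j) * j.factorial)) := by
  have hnat : (n.choose j * (n - 1 - j).descFactorial m *
      ((n - m - 1 - j).factorial * (n - j) * j.factorial) : ℝ) = n.factorial := by
    rw [← Nat.cast_sub (show j ≤ n by omega)]
    exact_mod_cast choose_mul_descFactorial_mul_factorial h
  have hsq : ((-1 : ℝ) ^ j) * (-1) ^ j = 1 := by rw [← mul_pow]; simp
  rw [show n - m - j = n - m - 1 - j + 1 by omega, show n - 1 - j - m = n - m - 1 - j by omega,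
    show (1 - n - c + a) = -(c - a + n - 1) by ring, poch_neg, poch_eq_descPochhammer,
    descPochhammer_succ_eval_left]
  rw [show (m + a + 1 - n + j + ((n - m - 1 - j + 1 : ℕ) : ℝ) - 1) = a by
    rw [Nat.cast_add_one, Nat.cast_sub (by omega), Nat.cast_sub (by omega),
      Nat.cast_sub (by omega)]
    ring]
  have hnj : (n : ℝ) - j ≠ 0 := sub_ne_zero.mpr (by norm_cast; omega)
  field_simp
  linear_combination (-1) ^ m * a * (descPochhammer ℝ j).eval (c - a + n - 1) *
    (descPochhammer ℝ (n - m - 1 - j)).eval (a - 1) * (hnat - n.factorial * hsq)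

theorem sum_hypergeometric_eq_poch {a c : ℝ} (ha : ∀ i : ℕ, a ≠ -i) (hc : ∀ i : ℕ, c ≠ -i)
    (m n : ℕ) :
    ∑ k ∈ range (m + 1), poch (-(m : ℝ)) k * poch a k * poch (c + n) k /
        (poch c k * poch (a + 1) k * k.factorial) =
      (-1) ^ n * m.factorial * poch (1 - n - c + a) n / (poch c n * poch (a + 1) m) +
        n.factorial / poch c n * ∑ k ∈ range (n - m), (-1) ^ (m + k) * poch (1 - n - c + a) k *
          poch (m + a + 1 - n + k) (n - m - k) /
            ((n - m - 1 - k).factorial * (n - k) * k.factorial) := by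
  rw [sum_congr rfl fun k _ => hypergeometric_term_eq ha hc m n k, ← mul_sum,
    sum_range_alternating_choose_mul_poch_div m n ha, mul_add]
  congr 1
  · have hreflect : (-1) ^ n * poch (1 - n - c + a) n = poch (c - a) n := by
      rw [show 1 - n - c + a = -(c - a + n - 1) by ring, poch_neg, ← mul_assoc, ← mul_pow,
        poch_eq_descPochhammer]
      simp
    have ha1 := add_one_ne_neg_natCast ha
    have := poch_ne_zero hc n
    have := poch_ne_zero ha1 m
    have : a ≠ 0 := by simpa using ha 0
    rw [mul_right_comm, hreflect, poch_succ_left]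
    field_simp
  · simp only [mul_sum]
    rw [← sum_subset (range_subset_range.mpr (Nat.sub_le n m))]
    · refine sum_congr rfl fun j hj => ?_
      rw [div_mul_eq_mul_div, div_mul_eq_mul_div,
        falling_summand_eq_poch_summand (by have := mem_range.mp hj; omega)]
    · intro j hjn hj
      rw [Nat.descFactorial_eq_zero_iff_lt.mpr (by simp at hjn hj; omega)]
      simp

lemma Gamma_add_nat_eq_poch_mul {x : ℝ} (hx : ∀ i : ℕ, x ≠ -i) (n : ℕ) :
    Real.Gamma (x + n) = poch x n * Real.Gamma x := by
  induction n with
  | zero => simp [poch]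
  | succ n ih =>
    have hxn : x + n ≠ 0 := fun h => hx n (by linarith)
    rw [Nat.cast_succ, ← add_assoc, Real.Gamma_add_one hxn, ih, poch_succ]
    ring

lemma Gamma_summand_eq_poch_summand {m n k : ℕ} (hk : k + m < n) {a b : ℝ}
    (ha : ∀ z : ℤ, a ≠ z) (hb : ∀ i : ℕ, b ≠ -i) :
    Real.Gamma (a + 1) / Real.Gamma b * ((-1) ^ (m + k) * Real.Gamma (b + k) /
      (Real.Gamma (n - m - k) * (n - k) * k.factorial * Real.Gamma (m + a + 1 - n + k))) =
    (-1) ^ (m + k) * poch b k * poch (m + a + 1 - n + k) (n - m - k) /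
      ((n - m - 1 - k).factorial * (n - k) * k.factorial) := by
  have hshift : ∀ i : ℕ, (m + a + 1 - n + k : ℝ) ≠ -i := fun i => by
    convert add_intCast_ne_neg_natCast ha (m + 1 - n + k) i using 1
    push_cast
    ring
  have hcast : ((n - m - 1 - k : ℕ) : ℝ) + 1 + m + k = n := by norm_cast; omega
  have hnk : (n : ℝ) - k ≠ 0 := by linarith
  rw [show a + 1 = (m + a + 1 - n + k) + ((n - m - 1 - k + 1 : ℕ) : ℝ) by push_cast; linarith,
    show (n : ℝ) - m - k = ((n - m - 1 - k : ℕ) : ℝ) + 1 by linarith,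
    Gamma_add_nat_eq_poch_mul hshift, Gamma_add_nat_eq_poch_mul hb, Real.Gamma_nat_eq_factorial,
    show n - m - 1 - k + 1 = n - m - k by omega]
  have := Real.Gamma_ne_zero hb
  have := Real.Gamma_ne_zero hshift
  field_simp

theorem karp_prilepkina_case_general (m n : ℕ)
    (a c : ℝ) (ha : ∀ z : ℤ, a ≠ (z : ℝ)) (hc : ∀ z : ℤ, c ≠ (z : ℝ))
    (hac : ∀ z : ℤ, a - c ≠ (z : ℝ)) :
    ∑ k ∈ range (m + 1),
        poch (-(m : ℝ)) k * poch a k * poch (c + (n : ℝ)) k /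
          (poch c k * poch (a + 1) k * (k.factorial : ℝ)) =
      (-1 : ℝ) ^ n * (m.factorial : ℝ) * Real.Gamma (1 - c + a) * Real.Gamma (a + 1) *
          Real.Gamma c /
          (Real.Gamma (c + (n : ℝ)) * Real.Gamma (1 - (n : ℝ) - c + a) *
            Real.Gamma ((m : ℝ) + a + 1)) +
        (n.factorial : ℝ) * Real.Gamma (a + 1) * Real.Gamma c /
            (Real.Gamma (c + (n : ℝ)) * Real.Gamma (1 - (n : ℝ) - c + a)) *
          ∑ k ∈ range (n - m),
            (-1 : ℝ) ^ (m + k) * Real.Gamma (1 - (n : ℝ) - c + a + (k : ℝ)) /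
              (Real.Gamma ((n : ℝ) - (m : ℝ) - (k : ℝ)) * ((n : ℝ) - (k : ℝ)) *
                (k.factorial : ℝ) *
                Real.Gamma ((m : ℝ) + a + 1 - (n : ℝ) + (k : ℝ))) := by
  have ha0 : ∀ i : ℕ, a ≠ -i := by simpa using add_intCast_ne_neg_natCast ha 0
  have ha1 := add_one_ne_neg_natCast ha0
  have hc0 : ∀ i : ℕ, c ≠ -i := by simpa using add_intCast_ne_neg_natCast hc 0
  have hb : ∀ i : ℕ, 1 - n - c + a ≠ -i := fun i => by
    convert add_intCast_ne_neg_natCast hac (1 - n) i using 1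
    push_cast
    ring
  have := Real.Gamma_ne_zero hc0
  have := poch_ne_zero hc0 n
  rw [sum_hypergeometric_eq_poch ha0 hc0, Gamma_add_nat_eq_poch_mul hc0]
  congr 1
  · rw [show 1 - c + a = (1 - n - c + a) + n by ring, show (m : ℝ) + a + 1 = (a + 1) + m by ring,
      Gamma_add_nat_eq_poch_mul hb, Gamma_add_nat_eq_poch_mul ha1]
    have := Real.Gamma_ne_zero ha1
    have := Real.Gamma_ne_zero hb
    have := poch_ne_zero ha1 m
    field_simp
  · rw [mul_sum, mul_sum]
    refine sum_congr rfl fun k hk => ?_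
    rw [← Gamma_summand_eq_poch_summand (by have := mem_range.mp hk; omega) ha hb]
    field_simp

/-- The Karp–Prilepkina-type evaluation of `₃F₂(−m, a, c+n; c, a+1; 1)` for `m ≤ n − 1`. -/
theorem karp_prilepkina_case (m n : ℕ) (hm : 0 < m) (hn : 0 < n) (hmn : m + 1 ≤ n)
    (a c : ℝ) (ha : ∀ z : ℤ, a ≠ (z : ℝ)) (hc : ∀ z : ℤ, c ≠ (z : ℝ))
    (hac : ∀ z : ℤ, a - c ≠ (z : ℝ)) :
    ∑ k ∈ range (m + 1),
        poch (-(m : ℝ)) k * poch a k * poch (c + (n : ℝ)) k /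
          (poch c k * poch (a + 1) k * (k.factorial : ℝ)) =
      (-1 : ℝ) ^ n * (m.factorial : ℝ) * Real.Gamma (1 - c + a) * Real.Gamma (a + 1) *
          Real.Gamma c /
          (Real.Gamma (c + (n : ℝ)) * Real.Gamma (1 - (n : ℝ) - c + a) *
            Real.Gamma ((m : ℝ) + a + 1)) +
        (n.factorial : ℝ) * Real.Gamma (a + 1) * Real.Gamma c /
            (Real.Gamma (c + (n : ℝ)) * Real.Gamma (1 - (n : ℝ) - c + a)) *
          ∑ k ∈ range (n - m),
            (-1 : ℝ) ^ (m + k) * Real.Gamma (1 - (n : ℝ) - c + a + (k : ℝ)) /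
              (Real.Gamma ((n : ℝ) - (m : ℝ) - (k : ℝ)) * ((n : ℝ) - (k : ℝ)) *
                (k.factorial : ℝ) *
                Real.Gamma ((m : ℝ) + a + 1 - (n : ℝ) + (k : ℝ))) :=
  karp_prilepkina_case_general m n a c ha hc hac
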